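/- Let Γ ∈ 𝓕_i(a_1,…,a_q; b_1,…,b_q), suppose i + 1 is not a sink of Γ and no edge of Γ begins at i. Let M_2(Γ) be the graph obtained from Γ by adding the edge (i, i + 1). Then M_2(Γ) ∈ 𝓕_i(a_1,…,a_q, i; b_1,…,b_q, i + 1) and sgn_i(M_2(Γ)) = −sgn_i(Γ). -/

import Mathlib

/-!
Since no edge of `Γ` begins at `i`, and `i + 1` is neither a source, a sink nor (being larger
than `i`) a transit point, both `i` and `i + 1` are isolated vertices of `Γ`. Adding the edge
`(i, i + 1)` therefore yields a flow in which the new source `i` is linked only to the new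
sink `i + 1`, with the same transit points. The linking permutation of `M₂(Γ)` is that of `Γ`
extended by a fixed point, so the sign changes only through the extra summand `(i + 1) - i = 1`.
-/

open Finset

/-- A "flow graph" is a finite set of directed edges with integer vertices. -/
abbrev FlowGraph : Type := Finset (ℤ × ℤ)

/-- The edges of `E` beginning at `r`. -/
def beginsAt (E : FlowGraph) (r : ℤ) : Finset (ℤ × ℤ) := E.filter (fun e => e.1 = r)

/-- The edges of `E` ending at `r`. -/
def endsAt (E : FlowGraph) (r : ℤ) : Finset (ℤ × ℤ) := E.filter (fun e => e.2 = r)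

/-- `E` is a flow with set of sources `A` and set of sinks `B`:
every edge `(s,t)` has `s < t`; the sources and sinks are pairwise distinct;
exactly one edge begins at each source (and none ends there); exactly one edge
ends at each sink (and none begins there); and every other vertex either meets
no edge, or exactly one edge ends at it and exactly one edge begins at it
(such a vertex is a transit point). -/
structure IsFlow (E : FlowGraph) (A B : Finset ℤ) : Prop where
  edge_lt : ∀ e ∈ E, e.1 < e.2
  disjAB : Disjoint A B
  source_out : ∀ a ∈ A, (beginsAt E a).card = 1
  source_in : ∀ a ∈ A, endsAt E a = ∅
  sink_in : ∀ b ∈ B, (endsAt E b).card = 1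
  sink_out : ∀ b ∈ B, beginsAt E b = ∅
  transit : ∀ r : ℤ, r ∉ A → r ∉ B →
      (beginsAt E r = ∅ ∧ endsAt E r = ∅) ∨
      ((beginsAt E r).card = 1 ∧ (endsAt E r).card = 1)

/-- The set of transit points of the flow `E` with sources `A` and sinks `B`:
the vertices meeting some edge which are neither sources nor sinks. -/
def transitSet (E : FlowGraph) (A B : Finset ℤ) : Finset ℤ :=
  ((E.image Prod.fst) ∪ (E.image Prod.snd)) \ (A ∪ B)

def IsTransitPoint (E : FlowGraph) (A B : Finset ℤ) (r : ℤ) : Prop :=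
  r ∈ transitSet E A B

/-- Two vertices are linked if they lie in the same connected component of `E`. -/
def Linked (E : FlowGraph) (x y : ℤ) : Prop :=
  Relation.ReflTransGen (fun u v => (u, v) ∈ E ∨ (v, u) ∈ E) x y

/-- The finset of values of a family of integers. -/
def srcSet {q : ℕ} (a : Fin q → ℤ) : Finset ℤ := Finset.image a Finset.univ

/-- Membership in `𝓕_i(a_1,…,a_q; b_1,…,b_q)` : a flow with sources the `a j`,
sinks the `b j`, and no transit point greater than `i`. -/
def InF {q : ℕ} (i : ℤ) (a b : Fin q → ℤ) (E : FlowGraph) : Prop :=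
  IsFlow E (srcSet a) (srcSet b) ∧
  ∀ r : ℤ, IsTransitPoint E (srcSet a) (srcSet b) r → r ≤ i

/-- `σ` is the linking permutation: the source `a j` is linked to the sink `b (σ j)`. -/
def IsLinkingPerm {q : ℕ} (E : FlowGraph) (a b : Fin q → ℤ) (σ : Equiv.Perm (Fin q)) : Prop :=
  ∀ j : Fin q, Linked E (a j) (b (σ j))

/-- The `i`-sign of a flow `E` (with sources `A`, sinks given by the family `b` and
sinks-set `B`), computed from a linking permutation `σ`:
`sgn σ * (-1) ^ (Σ_j (b_j - i) + #transit points)`. -/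
def signValue {q : ℕ} (i : ℤ) (b : Fin q → ℤ) (σ : Equiv.Perm (Fin q))
    (E : FlowGraph) (A B : Finset ℤ) : ℤ :=
  (Equiv.Perm.sign σ : ℤ) *
    (-1) ^ ((∑ j : Fin q, (b j - i)).toNat + (transitSet E A B).card)

def FlowGraph.vertices (E : FlowGraph) : Finset ℤ := E.image Prod.fst ∪ E.image Prod.snd

namespace FlowGraph

variable {E : FlowGraph} {A B : Finset ℤ} {r x y : ℤ}

lemma transitSet_eq (E : FlowGraph) (A B : Finset ℤ) :
    transitSet E A B = E.vertices \ (A ∪ B) := rfl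

lemma mem_vertices : r ∈ E.vertices ↔ (beginsAt E r).Nonempty ∨ (endsAt E r).Nonempty := by
  simp [vertices, beginsAt, endsAt, Finset.Nonempty]

lemma notMem_vertices : r ∉ E.vertices ↔ beginsAt E r = ∅ ∧ endsAt E r = ∅ := by
  simp [mem_vertices, Finset.not_nonempty_iff_eq_empty]

lemma vertices_insert (E : FlowGraph) (x y : ℤ) :
    vertices (insert (x, y) E) = insert x (insert y E.vertices) := by
  ext r
  simp [vertices, or_left_comm]

lemma beginsAt_insert_of_ne (h : r ≠ x) : beginsAt (insert (x, y) E) r = beginsAt E r := by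
  simp [beginsAt, Finset.filter_insert, Ne.symm h]

lemma endsAt_insert_of_ne (h : r ≠ y) : endsAt (insert (x, y) E) r = endsAt E r := by
  simp [endsAt, Finset.filter_insert, Ne.symm h]

lemma beginsAt_insert_self : beginsAt (insert (x, y) E) x = insert (x, y) (beginsAt E x) := by
  simp [beginsAt, Finset.filter_insert]

lemma endsAt_insert_self : endsAt (insert (x, y) E) y = insert (x, y) (endsAt E y) := by
  simp [endsAt, Finset.filter_insert]

lemma transitSet_insert_edge (hx : x ∉ E.vertices) (hy : y ∉ E.vertices) :
    transitSet (insert (x, y) E) (insert x A) (insert y B) = transitSet E A B := by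
  ext r
  simp only [transitSet_eq, vertices_insert, mem_sdiff, mem_insert, mem_union]
  by_cases hrx : r = x
  · subst hrx; tauto
  by_cases hry : r = y
  · subst hry; tauto
  tauto

end FlowGraph

lemma srcSet_snoc {q : ℕ} (a : Fin q → ℤ) (x : ℤ) :
    srcSet (Fin.snoc a x) = insert x (srcSet a) := by
  ext y
  simp [srcSet, Fin.exists_fin_succ', or_comm, eq_comm]

namespace Linked

variable {E : FlowGraph} {u v x y : ℤ}

lemma symm (h : Linked E u v) : Linked E v u :=
  Relation.ReflTransGen.mono (fun _ _ => Or.symm) _ _ h.swap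

lemma mem_vertices (h : Linked E u v) (hu : u ∈ E.vertices) : v ∈ E.vertices := by
  induction h with
  | refl => exact hu
  | tail _ hwv _ =>
    rcases hwv with hwv | hvw
    · exact mem_union_right _ (mem_image_of_mem Prod.snd hwv)
    · exact mem_union_left _ (mem_image_of_mem Prod.fst hvw)

lemma of_insert_edge (hx : x ∉ E.vertices) (hy : y ∉ E.vertices)
    (h : Linked (insert (x, y) E) u v) (hu : u ∈ E.vertices) : Linked E u v := by
  induction h with
  | refl => exact Relation.ReflTransGen.refl
  | @tail w v _ hwv ih =>
    have hw : w ∈ E.vertices := ih.mem_vertices hu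
    refine ih.tail ?_
    rcases hwv with hwv | hvw
    · rcases mem_insert.1 hwv with h | h
      · obtain ⟨rfl, -⟩ := Prod.mk.inj h
        exact absurd hw hx
      · exact Or.inl h
    · rcases mem_insert.1 hvw with h | h
      · obtain ⟨-, rfl⟩ := Prod.mk.inj h
        exact absurd hw hy
      · exact Or.inr h

end Linked

namespace IsFlow

open FlowGraph

variable {E : FlowGraph} {A B : Finset ℤ} {r x y : ℤ}

lemma left_subset_vertices (hF : IsFlow E A B) : A ⊆ E.vertices := fun a ha =>
  mem_vertices.2 (Or.inl (card_pos.1 (by rw [hF.source_out a ha]; exact one_pos)))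

lemma right_subset_vertices (hF : IsFlow E A B) : B ⊆ E.vertices := fun b hb =>
  mem_vertices.2 (Or.inr (card_pos.1 (by rw [hF.sink_in b hb]; exact one_pos)))

lemma notMem_vertices_of_beginsAt_eq_empty (hF : IsFlow E A B) (hrB : r ∉ B)
    (h : beginsAt E r = ∅) : r ∉ E.vertices := by
  have hrA : r ∉ A := fun hrA => by simpa [h] using hF.source_out r hrA
  rcases hF.transit r hrA hrB with hr | ⟨hr, -⟩
  · exact notMem_vertices.2 hr
  · simp [h] at hr

lemma insert_edge (hF : IsFlow E A B) (hxy : x < y) (hx : x ∉ E.vertices)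
    (hy : y ∉ E.vertices) : IsFlow (insert (x, y) E) (insert x A) (insert y B) := by
  have hxA : x ∉ A := fun h => hx (hF.left_subset_vertices h)
  have hyA : y ∉ A := fun h => hy (hF.left_subset_vertices h)
  have hxB : x ∉ B := fun h => hx (hF.right_subset_vertices h)
  have hyB : y ∉ B := fun h => hy (hF.right_subset_vertices h)
  obtain ⟨hbx, hex⟩ := notMem_vertices.1 hx
  obtain ⟨hby, hey⟩ := notMem_vertices.1 hy
  refine ⟨?_, ?_, ?_, ?_, ?_, ?_, ?_⟩
  · simp only [mem_insert, forall_eq_or_imp]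
    exact ⟨hxy, hF.edge_lt⟩
  · simp only [disjoint_insert_left, disjoint_insert_right, mem_insert, not_or]
    exact ⟨⟨hxy.ne', hyA⟩, hxB, hF.disjAB⟩
  · simp only [mem_insert, forall_eq_or_imp]
    refine ⟨by simp [beginsAt_insert_self, hbx], fun a ha => ?_⟩
    rw [beginsAt_insert_of_ne (ne_of_mem_of_not_mem ha hxA)]
    exact hF.source_out a ha
  · simp only [mem_insert, forall_eq_or_imp]
    refine ⟨by rw [endsAt_insert_of_ne hxy.ne, hex], fun a ha => ?_⟩
    rw [endsAt_insert_of_ne (ne_of_mem_of_not_mem ha hyA)]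
    exact hF.source_in a ha
  · simp only [mem_insert, forall_eq_or_imp]
    refine ⟨by simp [endsAt_insert_self, hey], fun b hb => ?_⟩
    rw [endsAt_insert_of_ne (ne_of_mem_of_not_mem hb hyB)]
    exact hF.sink_in b hb
  · simp only [mem_insert, forall_eq_or_imp]
    refine ⟨by rw [beginsAt_insert_of_ne hxy.ne', hby], fun b hb => ?_⟩
    rw [beginsAt_insert_of_ne (ne_of_mem_of_not_mem hb hxB)]
    exact hF.sink_out b hb
  · intro r hrA hrB
    simp only [mem_insert, not_or] at hrA hrB
    rw [beginsAt_insert_of_ne hrA.1, endsAt_insert_of_ne hrB.1]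
    exact hF.transit r hrA.2 hrB.2

lemma card_beginsAt_le_one (hF : IsFlow E A B) (r : ℤ) : (beginsAt E r).card ≤ 1 := by
  by_cases hrA : r ∈ A
  · exact (hF.source_out r hrA).le
  by_cases hrB : r ∈ B
  · simp [hF.sink_out r hrB]
  rcases hF.transit r hrA hrB with ⟨h, -⟩ | ⟨h, -⟩
  · simp [h]
  · exact h.le

lemma rightUnique (hF : IsFlow E A B) : Relator.RightUnique (fun s t => (s, t) ∈ E) :=
  fun w _ _ hc hd => congrArg Prod.snd <| card_le_one.1 (hF.card_beginsAt_le_one w) _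
    (mem_filter.2 ⟨hc, rfl⟩) _ (mem_filter.2 ⟨hd, rfl⟩)

/-- Each vertex has at most one outgoing edge, so two linked vertices flow into a common one. -/
lemma exists_common_descendant (hF : IsFlow E A B) {u v : ℤ} (h : Linked E u v) :
    ∃ w, Relation.ReflTransGen (fun s t => (s, t) ∈ E) u w ∧
      Relation.ReflTransGen (fun s t => (s, t) ∈ E) v w := by
  induction h using Relation.ReflTransGen.head_induction_on with
  | refl => exact ⟨v, .refl, .refl⟩
  | head hrel _ ih =>
    obtain ⟨w, hw, hvw⟩ := ih
    rcases hrel with hout | hin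
    · exact ⟨w, .head hout hw, hvw⟩
    · rcases Relation.ReflTransGen.cases_head hw with rfl | ⟨c, hc, hcw⟩
      · exact ⟨_, .refl, hvw.tail hin⟩
      · cases hF.rightUnique hc hin
        exact ⟨w, hcw, hvw⟩

lemma eq_of_mem_right_of_linked (hF : IsFlow E A B) {u v : ℤ} (hu : u ∈ B) (hv : v ∈ B)
    (h : Linked E u v) : u = v := by
  have descendant_eq : ∀ {t w : ℤ}, t ∈ B →
      Relation.ReflTransGen (fun s t => (s, t) ∈ E) t w → w = t := fun ht htw => by
    rcases Relation.ReflTransGen.cases_head htw with rfl | ⟨c, hc, -⟩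
    · rfl
    · have hc' : (_, c) ∈ beginsAt E _ := mem_filter.2 ⟨hc, rfl⟩
      simp [hF.sink_out _ ht] at hc'
  obtain ⟨w, huw, hvw⟩ := hF.exists_common_descendant h
  rw [← descendant_eq hu huw, descendant_eq hv hvw]

end IsFlow

lemma Equiv.Perm.sign_eq_of_apply_castSucc {q : ℕ} {σ : Equiv.Perm (Fin q)}
    {τ : Equiv.Perm (Fin (q + 1))} (h : ∀ j, τ j.castSucc = (σ j).castSucc) :
    Equiv.Perm.sign τ = Equiv.Perm.sign σ := by
  have hlast : τ (Fin.last q) = Fin.last q := by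
    rcases Fin.eq_castSucc_or_eq_last (τ (Fin.last q)) with ⟨k, hk⟩ | hk
    · have := τ.injective (hk.trans (by simp [h]) : τ (Fin.last q) = τ (σ.symm k).castSucc)
      exact absurd this (Fin.castSucc_lt_last _).ne'
    · exact hk
  have hτ : τ = σ.extendDomain (finSuccAboveEquiv (Fin.last q)) := by
    ext x
    rcases Fin.eq_castSucc_or_eq_last x with ⟨j, rfl⟩ | rfl
    · rw [h, Equiv.Perm.extendDomain_apply_subtype (b := j.castSucc) _ _
        (Fin.castSucc_lt_last j).ne]
      simp [finSuccAboveEquiv_apply, finSuccAboveEquiv_symm_apply_last]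
    · rw [hlast, Equiv.Perm.extendDomain_apply_not_subtype _ _ (by simp)]
  rw [hτ, Equiv.Perm.sign_extendDomain]

lemma IsLinkingPerm.apply_castSucc_of_insert_edge {E : FlowGraph} {q : ℕ} {a b : Fin q → ℤ}
    {x y : ℤ} {σ : Equiv.Perm (Fin q)} {τ : Equiv.Perm (Fin (q + 1))}
    (hF : IsFlow E (srcSet a) (srcSet b)) (hb : Function.Injective b)
    (hx : x ∉ E.vertices) (hy : y ∉ E.vertices)
    (hτ : IsLinkingPerm (insert (x, y) E) (Fin.snoc a x) (Fin.snoc b y) τ)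
    (hσ : IsLinkingPerm E a b σ) (j : Fin q) :
    τ j.castSucc = (σ j).castSucc := by
  have haj : a j ∈ E.vertices := hF.left_subset_vertices (mem_image_of_mem a (mem_univ j))
  have hl := (hτ j.castSucc).of_insert_edge hx hy (by simpa using haj)
  rw [Fin.snoc_castSucc] at hl
  rcases Fin.eq_castSucc_or_eq_last (τ j.castSucc) with ⟨k, hk⟩ | hk
  · rw [hk, Fin.snoc_castSucc] at hl
    rw [hk, hb (hF.eq_of_mem_right_of_linked (mem_image_of_mem b (mem_univ k))
      (mem_image_of_mem b (mem_univ (σ j))) (hl.symm.trans (hσ j)))]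
  · rw [hk, Fin.snoc_last] at hl
    exact absurd (hl.mem_vertices haj) hy

lemma sum_snoc_sub {q : ℕ} (b : Fin q → ℤ) (c i : ℤ) :
    ∑ j, ((Fin.snoc b c : Fin (q + 1) → ℤ) j - i) = ∑ j, (b j - i) + (c - i) := by
  simp only [Fin.sum_univ_castSucc, Fin.snoc_castSucc, Fin.snoc_last]

theorem statement6_general {q : ℕ} (i : ℤ) (a b : Fin q → ℤ)
    (hb : StrictAnti b)
    (hai : ∀ j, a j ≤ i) (hbi : ∀ j, i < b j)
    (E : FlowGraph) (hE : InF i a b E)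
    (hsink : ∀ j, b j ≠ i + 1)
    (hno : ∀ e ∈ E, e.1 ≠ i) :
    InF i (Fin.snoc a i) (Fin.snoc b (i + 1)) (insert (i, i + 1) E) ∧
    ∀ (σ : Equiv.Perm (Fin q)) (τ : Equiv.Perm (Fin (q + 1))),
      IsLinkingPerm E a b σ →
      IsLinkingPerm (insert (i, i + 1) E) (Fin.snoc a i) (Fin.snoc b (i + 1)) τ →
      signValue i (Fin.snoc b (i + 1)) τ (insert (i, i + 1) E)
          (srcSet (Fin.snoc a i)) (srcSet (Fin.snoc b (i + 1)))
        = - signValue i b σ E (srcSet a) (srcSet b) := by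
  obtain ⟨hF, htransit⟩ := hE
  have hi : i ∉ E.vertices := hF.notMem_vertices_of_beginsAt_eq_empty
    (by simpa [srcSet] using fun j => (hbi j).ne') (filter_eq_empty_iff.2 hno)
  have hi1 : i + 1 ∉ E.vertices := fun h => by
    have hA : i + 1 ∉ srcSet a := by
      simpa [srcSet] using fun j => ((hai j).trans_lt (lt_add_one i)).ne
    have hB : i + 1 ∉ srcSet b := by simpa [srcSet] using hsink
    have : i + 1 ∈ transitSet E (srcSet a) (srcSet b) := by
      simp [FlowGraph.transitSet_eq, h, hA, hB]
    linarith [htransit _ this]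
  have hts := FlowGraph.transitSet_insert_edge (A := srcSet a) (B := srcSet b) hi hi1
  simp only [InF, IsTransitPoint, srcSet_snoc]
  refine ⟨⟨hF.insert_edge (lt_add_one i) hi hi1, fun r hr => htransit r (hts ▸ hr :)⟩,
    fun σ τ hσ hτ => ?_⟩
  have hsign := Equiv.Perm.sign_eq_of_apply_castSucc
    (hτ.apply_castSucc_of_insert_edge hF hb.injective hi hi1 hσ)
  have hpos : 0 ≤ ∑ j, (b j - i) := sum_nonneg fun j _ => by linarith [hbi j]
  rw [signValue, signValue, hts, hsign, sum_snoc_sub, add_sub_cancel_left,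
    Int.toNat_add hpos zero_le_one, Int.toNat_one, add_right_comm, pow_succ]
  ring

/-- Lemma 16: let `Γ ∈ 𝓕_i(a_1,…,a_q; b_1,…,b_q)` with `i + 1` not a sink of `Γ`
and no edge of `Γ` beginning at `i`. Then `M_2(Γ)` (adding the edge `(i, i + 1)`)
belongs to `𝓕_i(a_1,…,a_q, i; b_1,…,b_q, i + 1)` and has `i`-sign opposite to
that of `Γ`. -/
theorem statement6 {q : ℕ} (i : ℤ) (a b : Fin q → ℤ)
    (ha : StrictMono a) (hb : StrictAnti b)
    (hai : ∀ j, a j ≤ i) (hbi : ∀ j, i < b j)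
    (E : FlowGraph) (hE : InF i a b E)
    (hsink : ∀ j, b j ≠ i + 1)
    (hno : ∀ e ∈ E, e.1 ≠ i) :
    InF i (Fin.snoc a i) (Fin.snoc b (i + 1)) (insert (i, i + 1) E) ∧
    ∀ (σ : Equiv.Perm (Fin q)) (τ : Equiv.Perm (Fin (q + 1))),
      IsLinkingPerm E a b σ →
      IsLinkingPerm (insert (i, i + 1) E) (Fin.snoc a i) (Fin.snoc b (i + 1)) τ →
      signValue i (Fin.snoc b (i + 1)) τ (insert (i, i + 1) E)
          (srcSet (Fin.snoc a i)) (srcSet (Fin.snoc b (i + 1)))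
        = - signValue i b σ E (srcSet a) (srcSet b) :=
  statement6_general i a b hb hai hbi E hE hsink hno
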